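/- With K(x,y) = 1 - tx - txy^2/((x-y)(y-1)), the decoupling identity x(y-1)/(1-tx) = A(x) + B(y) + K(x,y)·(x-y)(1-txy)/(xy t^2 (1-tx)) holds, where A(x) = (2+x)/t + 1/(t^2 x) + 1/(t(tx-1)) and B(y) = -y/t + 1/(t(y-1)) - 1/(t^2 y). -/

import Mathlib

/-! Clearing denominators turns the identity into a polynomial identity, valid in any field in
which `t`, `x`, `y`, `y - 1`, `x - y` and `1 - t x` are nonzero; in `ℚ(t, x, y)` each of these is
the image of a nonzero polynomial in one of the three nested variables. -/

/-- The field `ℚ(t, x, y)` of rational functions in three variables. -/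
noncomputable abbrev RF : Type := RatFunc (RatFunc (RatFunc ℚ))

/-- The variable `t`. -/
noncomputable def tF : RF := RatFunc.C (RatFunc.C RatFunc.X)
/-- The variable `x`. -/
noncomputable def xF : RF := RatFunc.C RatFunc.X
/-- The variable `y`. -/
noncomputable def yF : RF := RatFunc.X

/-- The kernel `K(x,y)`. -/
noncomputable def KerXY : RF :=
  1 - tF * xF - tF * xF * yF ^ 2 / ((xF - yF) * (yF - 1))

/-- The series `A(x)`. -/
noncomputable def Adec : RF :=
  (2 + xF) / tF + 1 / (tF ^ 2 * xF) + 1 / (tF * (tF * xF - 1))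

/-- The series `B(y)`. -/
noncomputable def Bdec : RF :=
  -yF / tF + 1 / (tF * (yF - 1)) - 1 / (tF ^ 2 * yF)

theorem decoupling_identity {K : Type*} [Field K] {t x y : K}
    (ht : t ≠ 0) (hx : x ≠ 0) (hy : y ≠ 0) (hy1 : y - 1 ≠ 0) (hxy : x - y ≠ 0)
    (htx : 1 - t * x ≠ 0) :
    x * (y - 1) / (1 - t * x) =
      ((2 + x) / t + 1 / (t ^ 2 * x) + 1 / (t * (t * x - 1))) +
      (-y / t + 1 / (t * (y - 1)) - 1 / (t ^ 2 * y)) +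
      (1 - t * x - t * x * y ^ 2 / ((x - y) * (y - 1))) *
        ((x - y) * (1 - t * x * y) / (x * y * t ^ 2 * (1 - t * x))) := by
  -- `field_simp` normalizes the denominator `1 - t * x` to `1 - x * t`
  have hxt : 1 - x * t ≠ 0 := by rwa [mul_comm]
  have hxt' : x * t - 1 ≠ 0 := by rwa [← neg_sub, neg_ne_zero]
  field_simp
  ring

namespace RatFunc

variable {K : Type*} [Field K]

theorem X_sub_C_ne_zero (a : K) : (X : RatFunc K) - C a ≠ 0 := by
  rw [← algebraMap_X, ← algebraMap_C, ← map_sub]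
  exact algebraMap_ne_zero (Polynomial.X_sub_C_ne_zero a)

theorem one_sub_C_mul_X_ne_zero (a : K) : 1 - C a * (X : RatFunc K) ≠ 0 := by
  rw [← algebraMap_X, ← algebraMap_C, ← map_mul,
    ← map_one (algebraMap (Polynomial K) (RatFunc K)), ← map_sub]
  refine algebraMap_ne_zero fun h => ?_
  simpa using congrArg (Polynomial.coeff · 0) h

end RatFunc

theorem tF_ne_zero : tF ≠ 0 := by
  simpa [tF] using RatFunc.X_ne_zero (K := ℚ)

theorem xF_ne_zero : xF ≠ 0 := by
  simpa [xF] using RatFunc.X_ne_zero (K := RatFunc ℚ)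

theorem yF_ne_zero : yF ≠ 0 := RatFunc.X_ne_zero

theorem yF_sub_one_ne_zero : yF - 1 ≠ 0 := by
  simpa [yF] using RatFunc.X_sub_C_ne_zero (1 : RatFunc (RatFunc ℚ))

theorem xF_sub_yF_ne_zero : xF - yF ≠ 0 := by
  rw [← neg_sub, neg_ne_zero]
  exact RatFunc.X_sub_C_ne_zero _

theorem one_sub_tF_mul_xF_ne_zero : 1 - tF * xF ≠ 0 := by
  rw [tF, xF, ← map_mul, ← map_one RatFunc.C, ← map_sub, map_ne_zero]
  exact RatFunc.one_sub_C_mul_X_ne_zero _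

/-- The decoupling identity
`x(y-1)/(1-tx) = A(x) + B(y) + K(x,y)·(x-y)(1-txy)/(xy t² (1-tx))` in `ℚ(t,x,y)`. -/
theorem stmt17 :
    xF * (yF - 1) / (1 - tF * xF) =
      Adec + Bdec +
        KerXY * ((xF - yF) * (1 - tF * xF * yF) / (xF * yF * tF ^ 2 * (1 - tF * xF))) :=
  decoupling_identity (K := RF) tF_ne_zero xF_ne_zero yF_ne_zero yF_sub_one_ne_zero
    xF_sub_yF_ne_zero one_sub_tF_mul_xF_ne_zero
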